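/- For all integers k ≥ 3, D ≥ 4, and n = D + 2k − 1, there exists a connected nonbipartite graph G of order n and diameter D with μ(G) > k and μ(G) + μ_min(G) < 4/(k−1)^{2D−4}. -/

import Mathlib

open Classical in
noncomputable def adjMat {V : Type*} [Fintype V] (G : SimpleGraph V) :
    Matrix V V ℝ :=
  Matrix.of fun i j => if G.Adj i j then 1 else 0

def IsAdjEigenvalue {V : Type*} [Fintype V] (A : Matrix V V ℝ) (μ : ℝ) : Prop :=
  ∃ x : V → ℝ, x ≠ 0 ∧ A.mulVec x = μ • x

def IsMaxAdjEigenvalue {V : Type*} [Fintype V] (A : Matrix V V ℝ) (μ : ℝ) : Prop :=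
  IsAdjEigenvalue A μ ∧ ∀ ν, IsAdjEigenvalue A ν → ν ≤ μ

def IsMinAdjEigenvalue {V : Type*} [Fintype V] (A : Matrix V V ℝ) (μ : ℝ) : Prop :=
  IsAdjEigenvalue A μ ∧ ∀ ν, IsAdjEigenvalue A ν → μ ≤ ν


set_option linter.unusedSectionVars false
set_option maxHeartbeats 1000000

def gRel (k D : ℕ) (x y : ℕ) : Prop :=
  x < y ∧ (y ≤ 2 ∨ (2 ≤ x ∧ y = x + 1 ∧ y ≤ D - 1) ∨
    (D - 1 ≤ x ∧ x ≤ D + k - 2 ∧ D + k - 1 ≤ y))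

def myG (k D n : ℕ) : SimpleGraph (Fin n) where
  Adj u v := gRel k D u.val v.val ∨ gRel k D v.val u.val
  symm := ⟨fun u v h => h.symm⟩
  loopless := ⟨fun u h => by rcases h with ⟨h, -⟩ | ⟨h, -⟩ <;> omega⟩

def lvl (k D : ℕ) (v : ℕ) : ℕ :=
  if v ≤ 1 then 0 else if v ≤ D - 1 then v - 1 else if D + k - 1 ≤ v then D - 1 else D

/-- a canonical vertex of each level -/
def vtx (k D : ℕ) (c : ℕ) : ℕ :=
  if c = 0 then 0 else if c ≤ D - 2 then c + 1 else if c = D - 1 then D + k - 1 else D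

section basic
variable {k D n : ℕ} (hk : 3 ≤ k) (hD : 4 ≤ D) (hn : n = D + 2 * k - 1)

lemma myG_adj_iff (u v : Fin n) :
    (myG k D n).Adj u v ↔ gRel k D u.val v.val ∨ gRel k D v.val u.val := Iff.rfl

include hk hD hn

lemma lvl_le (v : Fin n) : lvl k D v.val ≤ D := by
  have := v.isLt; unfold lvl; split_ifs <;> omega

lemma adj_lvl {u v : Fin n} (h : (myG k D n).Adj u v) :
    ((u.val = 0 ∧ v.val = 1) ∨ (u.val = 1 ∧ v.val = 0)) ∨
      lvl k D v.val = lvl k D u.val + 1 ∨ lvl k D u.val = lvl k D v.val + 1 := by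
  have hu := u.isLt; have hv := v.isLt
  rcases h with ⟨h1, h2⟩ | ⟨h1, h2⟩ <;> unfold lvl <;> split_ifs <;> omega

lemma adj_of_lvl_succ {u v : Fin n} (h : lvl k D v.val = lvl k D u.val + 1) :
    (myG k D n).Adj u v := by
  have hu := u.isLt; have hv := v.isLt
  rw [myG_adj_iff]; unfold gRel
  unfold lvl at h; split_ifs at h <;> omega

lemma vtx_lt (c : ℕ) (hc : c ≤ D) : vtx k D c < n := by
  unfold vtx; split_ifs <;> omega

lemma lvl_vtx (c : ℕ) (hc : c ≤ D) : lvl k D (vtx k D c) = c := by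
  unfold vtx lvl; split_ifs <;> omega

lemma adj_mk {a b : ℕ} (ha : a < n) (hb : b < n)
    (h : gRel k D a b ∨ gRel k D b a) : (myG k D n).Adj ⟨a, ha⟩ ⟨b, hb⟩ := h

lemma adj_mk_left {a : ℕ} (ha : a < n) (u : Fin n)
    (h : gRel k D a u.val ∨ gRel k D u.val a) : (myG k D n).Adj ⟨a, ha⟩ u := h

lemma reach_zero (hn0 : 0 < n) (v : Fin n) : (myG k D n).Reachable ⟨0, hn0⟩ v := by
  have key : ∀ m : ℕ, ∀ v : Fin n, v.val = m → m ≤ D - 1 →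
      (myG k D n).Reachable ⟨0, hn0⟩ v := by
    intro m
    induction m using Nat.strong_induction_on with
    | _ m ih =>
      intro v hv hm
      rcases Nat.eq_zero_or_pos m with h0 | hpos
      · have : v = ⟨0, hn0⟩ := by apply Fin.ext; simp [hv, h0]
        rw [this]
      · have hw : m - 1 < n := by omega
        have hreach : (myG k D n).Reachable ⟨0, hn0⟩ ⟨m - 1, hw⟩ :=
          ih (m - 1) (by omega) _ rfl (by omega)
        refine hreach.trans (SimpleGraph.Adj.reachable ?_)
        apply adj_mk_left hk hD hn
        rcases Nat.lt_or_ge m 3 with h3 | h3 <;> unfold gRel <;> simp [hv] <;> omega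
  have hustar : D - 1 < n := by omega
  have r1 : (myG k D n).Reachable ⟨0, hn0⟩ ⟨D - 1, hustar⟩ := key (D - 1) _ rfl (by omega)
  rcases Nat.lt_or_ge v.val D with h | h
  · exact key v.val v rfl (by omega)
  · rcases Nat.lt_or_ge v.val (D + k - 1) with h2 | h2
    · -- v ∈ U' : go u* → w → v
      have hw : D + k - 1 < n := by omega
      have r2 : (myG k D n).Reachable ⟨0, hn0⟩ ⟨D + k - 1, hw⟩ :=
        r1.trans (SimpleGraph.Adj.reachable
          (adj_mk hk hD hn hustar hw (Or.inl ⟨by omega, Or.inr (Or.inr (by omega))⟩)))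
      exact r2.trans (SimpleGraph.Adj.reachable
        ((adj_mk_left hk hD hn hw v (Or.inr ⟨by omega, Or.inr (Or.inr (by omega))⟩)))
      )
    · -- v ∈ W, adjacent to u*
      exact r1.trans (SimpleGraph.Adj.reachable
        (adj_mk_left hk hD hn hustar v (Or.inl ⟨by omega, Or.inr (Or.inr (by omega))⟩)))

lemma myG_connected : (myG k D n).Connected := by
  have hn0 : 0 < n := by omega
  rw [SimpleGraph.connected_iff]
  exact ⟨fun u v => (reach_zero hk hD hn hn0 u).symm.trans (reach_zero hk hD hn hn0 v),
    ⟨⟨0, hn0⟩⟩⟩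

lemma myG_not_colorable : ¬ (myG k D n).Colorable 2 := by
  rintro ⟨C⟩
  have h0 : (0:ℕ) < n := by omega
  have h1 : (1:ℕ) < n := by omega
  have h2 : (2:ℕ) < n := by omega
  have a01 : (myG k D n).Adj ⟨0,h0⟩ ⟨1,h1⟩ :=
    Or.inl (show gRel k D 0 1 from ⟨by omega, Or.inl (by omega)⟩)
  have a02 : (myG k D n).Adj ⟨0,h0⟩ ⟨2,h2⟩ :=
    Or.inl (show gRel k D 0 2 from ⟨by omega, Or.inl (by omega)⟩)
  have a12 : (myG k D n).Adj ⟨1,h1⟩ ⟨2,h2⟩ :=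
    Or.inl (show gRel k D 1 2 from ⟨by omega, Or.inl (by omega)⟩)
  have key : ∀ u v, C u ≠ C v → (C u).val ≠ (C v).val :=
    fun u v h hv => h (Fin.ext hv)
  have n01 := key _ _ (C.valid a01)
  have n02 := key _ _ (C.valid a02)
  have n12 := key _ _ (C.valid a12)
  have l0 := (C ⟨0,h0⟩).isLt
  have l1 := (C ⟨1,h1⟩).isLt
  have l2 := (C ⟨2,h2⟩).isLt
  omega

lemma lvl_zero_val {w : Fin n} (h : lvl k D w.val = 0) : w.val ≤ 1 := by
  unfold lvl at h; split_ifs at h <;> omega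

lemma lvl_lip {u v : Fin n} (p : (myG k D n).Walk u v) :
    (lvl k D v.val : ℤ) ≤ lvl k D u.val + p.length := by
  induction p with
  | nil => simp
  | @cons a b c hadj p ih =>
    have h := adj_lvl hk hD hn hadj
    have : (lvl k D b.val : ℤ) ≤ lvl k D a.val + 1 := by
      rcases h with (⟨h1, h2⟩ | ⟨h1, h2⟩) | h | h
      · unfold lvl; split_ifs <;> omega
      · unfold lvl; split_ifs <;> omega
      · omega
      · omega
    simp only [SimpleGraph.Walk.length_cons]
    push_cast
    omega

lemma dist_le_of_lvl (m : ℕ) (hm : 1 ≤ m) :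
    ∀ u v : Fin n, lvl k D v.val = lvl k D u.val + m → (myG k D n).dist u v ≤ m := by
  induction m with
  | zero => omega
  | succ m ih =>
    intro u v hlv
    rcases Nat.eq_zero_or_pos m with h0 | hpos
    · subst h0
      exact le_of_eq (SimpleGraph.dist_eq_one_iff_adj.mpr (adj_of_lvl_succ hk hD hn hlv))
    · have hc : lvl k D u.val + m ≤ D := by
        have := lvl_le hk hD hn v; omega
      have hvt : vtx k D (lvl k D u.val + m) < n := vtx_lt hk hD hn _ hc
      set w : Fin n := ⟨vtx k D (lvl k D u.val + m), hvt⟩ with hw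
      have hlw : lvl k D w.val = lvl k D u.val + m := lvl_vtx hk hD hn _ hc
      have h1 : (myG k D n).dist u w ≤ m := ih hpos u w hlw
      have h2 : (myG k D n).Adj w v := adj_of_lvl_succ hk hD hn (by omega)
      calc (myG k D n).dist u v ≤ (myG k D n).dist u w + (myG k D n).dist w v :=
            (myG_connected hk hD hn).dist_triangle
        _ ≤ m + 1 := by
            have := SimpleGraph.dist_eq_one_iff_adj.mpr h2
            omega

lemma myG_dist_le (u v : Fin n) : (myG k D n).dist u v ≤ D := by
  have main : ∀ u v : Fin n, lvl k D u.val ≤ lvl k D v.val → (myG k D n).dist u v ≤ D := by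
    intro u v hle
    rcases Nat.lt_or_ge (lvl k D u.val) (lvl k D v.val) with hlt | hge
    · have := dist_le_of_lvl hk hD hn (lvl k D v.val - lvl k D u.val) (by omega) u v (by omega)
      have := lvl_le hk hD hn v
      omega
    · have heq : lvl k D u.val = lvl k D v.val := by omega
      by_cases huv : u = v
      · rw [huv, SimpleGraph.dist_self]; omega
      · rcases Nat.eq_zero_or_pos (lvl k D u.val) with h0 | hpos
        · have hu1 : u.val ≤ 1 := lvl_zero_val hk hD hn h0
          have hv1 : v.val ≤ 1 := lvl_zero_val hk hD hn (heq.symm.trans h0)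
          have hne : u.val ≠ v.val := fun hc => huv (Fin.ext hc)
          have hadj : (myG k D n).Adj u v := by
            rcases Nat.lt_or_ge u.val v.val with hlt2 | hge2
            · exact Or.inl ⟨hlt2, Or.inl (by omega)⟩
            · exact Or.inr ⟨by omega, Or.inl (by omega)⟩
          have := SimpleGraph.dist_eq_one_iff_adj.mpr hadj
          omega
        · have hc : lvl k D u.val - 1 ≤ D := by have := lvl_le hk hD hn u; omega
          have hvt : vtx k D (lvl k D u.val - 1) < n := vtx_lt hk hD hn _ hc
          set w : Fin n := ⟨vtx k D (lvl k D u.val - 1), hvt⟩ with hwdef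
          have hlw : lvl k D w.val = lvl k D u.val - 1 := lvl_vtx hk hD hn _ hc
          have h1 : (myG k D n).Adj w u := adj_of_lvl_succ hk hD hn (by omega)
          have h2 : (myG k D n).Adj w v := adj_of_lvl_succ hk hD hn (by omega)
          calc (myG k D n).dist u v ≤ (myG k D n).dist u w + (myG k D n).dist w v :=
                (myG_connected hk hD hn).dist_triangle
            _ ≤ D := by
                have e1 := SimpleGraph.dist_eq_one_iff_adj.mpr h1.symm
                have e2 := SimpleGraph.dist_eq_one_iff_adj.mpr h2
                omega
  rcases Nat.le_total (lvl k D u.val) (lvl k D v.val) with h | h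
  · exact main u v h
  · rw [SimpleGraph.dist_comm]; exact main v u h

lemma myG_dist_exists : ∃ u v : Fin n, (myG k D n).dist u v = D := by
  have h0 : (0:ℕ) < n := by omega
  have hDn : D < n := by omega
  refine ⟨⟨0, h0⟩, ⟨D, hDn⟩, le_antisymm (myG_dist_le hk hD hn _ _) ?_⟩
  obtain ⟨p, hp⟩ := ((myG_connected hk hD hn).exists_walk_length_eq_dist ⟨0, h0⟩ ⟨D, hDn⟩)
  have hlip := lvl_lip hk hD hn p
  have hl0 : lvl k D ((⟨0, h0⟩ : Fin n)).val = 0 := by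
    show lvl k D 0 = 0; unfold lvl; split_ifs <;> omega
  have hlD : lvl k D ((⟨D, hDn⟩ : Fin n)).val = D := by
    show lvl k D D = D; unfold lvl; split_ifs <;> omega
  rw [hl0, hlD, hp] at hlip
  omega

end basic

section spectral
open Matrix
variable {V : Type*} [Fintype V] [DecidableEq V] {A : Matrix V V ℝ}

lemma eigenvalues_isAdjEigenvalue (hA : A.IsHermitian) (i : V) :
    IsAdjEigenvalue A (hA.eigenvalues i) := by
  refine ⟨⇑(hA.eigenvectorBasis i), ?_, hA.mulVec_eigenvectorBasis i⟩
  intro h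
  apply hA.eigenvectorBasis.orthonormal.ne_zero i
  ext j
  exact congrFun h j

lemma quad_repr (hA : A.IsHermitian) (x : V → ℝ) :
    x ⬝ᵥ (A *ᵥ x) = ∑ i, hA.eigenvalues i *
        ((star (hA.eigenvectorUnitary : Matrix V V ℝ) *ᵥ x) i)^2 ∧
      x ⬝ᵥ x = ∑ i, ((star (hA.eigenvectorUnitary : Matrix V V ℝ) *ᵥ x) i)^2 := by
  set U : Matrix V V ℝ := (hA.eigenvectorUnitary : Matrix V V ℝ) with hU
  set y : V → ℝ := star U *ᵥ x with hy
  have hU2 : U * star U = 1 := Matrix.mem_unitaryGroup_iff.mp hA.eigenvectorUnitary.2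
  have hU1 : star U * U = 1 := Matrix.mem_unitaryGroup_iff'.mp hA.eigenvectorUnitary.2
  have hxy : x = U *ᵥ y := by
    rw [hy, Matrix.mulVec_mulVec, hU2, Matrix.one_mulVec]
  have hsU : star U = Uᵀ := by
    rw [Matrix.star_eq_conjTranspose]
    ext i j
    simp [Matrix.conjTranspose_apply]
  have hpres : ∀ w z : V → ℝ, (U *ᵥ w) ⬝ᵥ (U *ᵥ z) = w ⬝ᵥ z := by
    intro w z
    rw [Matrix.dotProduct_mulVec, ← Matrix.vecMul_transpose, Matrix.vecMul_vecMul,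
      ← hsU, hU1, Matrix.vecMul_one]
  constructor
  · have hAx : A *ᵥ x = U *ᵥ (Matrix.diagonal hA.eigenvalues *ᵥ y) := by
      conv_lhs => rw [hA.spectral_theorem]
      rw [RCLike.ofReal_real_eq_id]
      simp only [Function.id_comp]
      rw [Unitary.conjStarAlgAut_apply]
      rw [← Matrix.mulVec_mulVec, ← Matrix.mulVec_mulVec, hy]
    rw [hAx, hxy, hpres]
    unfold dotProduct
    refine Finset.sum_congr rfl fun i _ => ?_
    rw [Matrix.mulVec_diagonal]
    ring
  · rw [hxy, hpres]
    unfold dotProduct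
    exact Finset.sum_congr rfl fun i _ => (pow_two (y i)).symm

end spectral

section spectral2
open Matrix
variable {V : Type*} [Fintype V] [DecidableEq V] {A : Matrix V V ℝ} {μ : ℝ}

lemma quad_le_max (hA : A.IsHermitian) (hmax : IsMaxAdjEigenvalue A μ) (x : V → ℝ) :
    x ⬝ᵥ (A *ᵥ x) ≤ μ * (x ⬝ᵥ x) := by
  obtain ⟨h1, h2⟩ := quad_repr hA x
  rw [h1, h2, Finset.mul_sum]
  refine Finset.sum_le_sum fun i _ => ?_
  exact mul_le_mul_of_nonneg_right (hmax.2 _ (eigenvalues_isAdjEigenvalue hA i)) (sq_nonneg _)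

lemma quad_ge_min (hA : A.IsHermitian) (hmin : IsMinAdjEigenvalue A μ) (x : V → ℝ) :
    μ * (x ⬝ᵥ x) ≤ x ⬝ᵥ (A *ᵥ x) := by
  obtain ⟨h1, h2⟩ := quad_repr hA x
  rw [h1, h2, Finset.mul_sum]
  refine Finset.sum_le_sum fun i _ => ?_
  exact mul_le_mul_of_nonneg_right (hmin.2 _ (eigenvalues_isAdjEigenvalue hA i)) (sq_nonneg _)

lemma star_id_real (z : V → ℝ) : star z = z := by
  funext i; simp

lemma exists_nonneg_eigenvector (hA : A.IsHermitian) (hnn : ∀ i j, 0 ≤ A i j)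
    (hmax : IsMaxAdjEigenvalue A μ) :
    ∃ x : V → ℝ, x ≠ 0 ∧ (∀ i, 0 ≤ x i) ∧ A *ᵥ x = μ • x := by
  obtain ⟨x, hx0, heig⟩ := hmax.1
  set z : V → ℝ := fun i => |x i| with hz
  have hz0 : z ≠ 0 := by
    intro h
    apply hx0
    funext i
    have := congrFun h i
    simp only [hz, Pi.zero_apply] at this ⊢
    exact abs_eq_zero.mp this
  have hznn : ∀ i, 0 ≤ z i := fun i => abs_nonneg _
  have hzx : z ⬝ᵥ z = x ⬝ᵥ x := by
    unfold dotProduct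
    exact Finset.sum_congr rfl fun i _ => abs_mul_abs_self (x i)
  have hxx : x ⬝ᵥ (A *ᵥ x) = μ * (x ⬝ᵥ x) := by
    rw [heig, dotProduct_smul, smul_eq_mul]
  have h1 : μ * (z ⬝ᵥ z) ≤ z ⬝ᵥ (A *ᵥ z) := by
    rw [hzx, ← hxx]
    unfold dotProduct mulVec
    refine Finset.sum_le_sum fun i _ => ?_
    unfold dotProduct
    rw [Finset.mul_sum, Finset.mul_sum]
    refine Finset.sum_le_sum fun j _ => ?_
    calc x i * (A i j * x j) ≤ |x i * (A i j * x j)| := le_abs_self _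
      _ = z i * (A i j * z j) := by
          rw [abs_mul, abs_mul, abs_of_nonneg (hnn i j)]
  have h2 : z ⬝ᵥ (A *ᵥ z) ≤ μ * (z ⬝ᵥ z) := quad_le_max hA hmax z
  have heq : z ⬝ᵥ (A *ᵥ z) = μ * (z ⬝ᵥ z) := le_antisymm h2 h1
  -- μ•1 - A is PSD, and z is in its kernel
  set M : Matrix V V ℝ := μ • (1 : Matrix V V ℝ) - A with hM
  have hMherm : M.IsHermitian := by
    refine Matrix.IsHermitian.sub ?_ hA
    show (μ • (1 : Matrix V V ℝ))ᴴ = μ • (1 : Matrix V V ℝ)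
    rw [Matrix.conjTranspose_smul, Matrix.conjTranspose_one]
    simp
  have hMval : ∀ w : V → ℝ, w ⬝ᵥ (M *ᵥ w) = μ * (w ⬝ᵥ w) - w ⬝ᵥ (A *ᵥ w) := by
    intro w
    rw [hM, sub_mulVec, dotProduct_sub, smul_mulVec, one_mulVec, dotProduct_smul,
      smul_eq_mul]
  have hMpsd : M.PosSemidef := by
    refine .of_dotProduct_mulVec_nonneg hMherm fun w => ?_
    rw [star_id_real, hMval]
    have := quad_le_max hA hmax w
    linarith
  have hker : M *ᵥ z = 0 := by
    rw [← hMpsd.dotProduct_mulVec_zero_iff, star_id_real, hMval, heq]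
    ring
  refine ⟨z, hz0, hznn, ?_⟩
  have : μ • z - A *ᵥ z = 0 := by
    rw [← hker, hM, sub_mulVec, smul_mulVec, one_mulVec]
  have := sub_eq_zero.mp this
  exact this.symm

end spectral2

instance gRel.dec (k D : ℕ) : DecidableRel (gRel k D) := fun x y =>
  decidable_of_iff (x < y ∧ (y ≤ 2 ∨ (2 ≤ x ∧ y = x + 1 ∧ y ≤ D - 1) ∨
    (D - 1 ≤ x ∧ x ≤ D + k - 2 ∧ D + k - 1 ≤ y))) Iff.rfl

instance myG.adjDec (k D n : ℕ) : DecidableRel (myG k D n).Adj := fun u v =>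
  instDecidableOr

section nbhd
open Matrix Finset
variable {k D n : ℕ} (hk : 3 ≤ k) (hD : 4 ≤ D) (hn : n = D + 2 * k - 1)

lemma adjMat_herm (G : SimpleGraph (Fin n)) : (adjMat G).IsHermitian := by
  ext i j
  simp only [adjMat, Matrix.conjTranspose_apply, Matrix.of_apply, star_trivial]
  by_cases h : G.Adj j i
  · rw [if_pos h, if_pos h.symm]
  · rw [if_neg h, if_neg (fun hc => h hc.symm)]

lemma adjMat_nonneg (G : SimpleGraph (Fin n)) (i j : Fin n) : 0 ≤ adjMat G i j := by
  simp only [adjMat, Matrix.of_apply]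
  split_ifs <;> norm_num

lemma mulVec_adj (G : SimpleGraph (Fin n)) [DecidableRel G.Adj] (x : Fin n → ℝ) (v : Fin n) :
    (adjMat G *ᵥ x) v = ∑ w, if G.Adj v w then x w else 0 := by
  unfold adjMat Matrix.mulVec dotProduct
  refine Finset.sum_congr rfl fun w _ => ?_
  simp only [Matrix.of_apply, ite_mul, one_mul, zero_mul]

lemma sum_ite_two {a b : Fin n} (hab : a ≠ b) (P : Fin n → Prop) [DecidablePred P]
    (hP : ∀ w, P w ↔ w = a ∨ w = b) (x : Fin n → ℝ) :
    (∑ w, if P w then x w else 0) = x a + x b := by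
  have key : ∀ w, (if P w then x w else 0)
      = (if w = a then x w else 0) + (if w = b then x w else 0) := by
    intro w
    by_cases h1 : w = a
    · rw [if_pos ((hP w).mpr (Or.inl h1)), if_pos h1,
        if_neg (fun h => hab (h1.symm.trans h)), add_zero]
    · by_cases h2 : w = b
      · rw [if_pos ((hP w).mpr (Or.inr h2)), if_neg h1, if_pos h2, zero_add]
      · rw [if_neg (fun h => by rcases (hP w).mp h with h' | h' <;> contradiction),
          if_neg h1, if_neg h2, add_zero]
  rw [Finset.sum_congr rfl fun w _ => key w, Finset.sum_add_distrib,
    Finset.sum_ite_eq' univ a x, Finset.sum_ite_eq' univ b x]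
  simp

lemma sum_ite_three {a b c : Fin n} (hab : a ≠ b) (hac : a ≠ c) (hbc : b ≠ c)
    (P : Fin n → Prop) [DecidablePred P]
    (hP : ∀ w, P w ↔ w = a ∨ w = b ∨ w = c) (x : Fin n → ℝ) :
    (∑ w, if P w then x w else 0) = x a + x b + x c := by
  have key : ∀ w, (if P w then x w else 0)
      = ((if w = a then x w else 0) + (if w = b then x w else 0))
        + (if w = c then x w else 0) := by
    intro w
    by_cases h1 : w = a
    · rw [if_pos ((hP w).mpr (Or.inl h1)), if_pos h1,
        if_neg (fun h => hab (h1.symm.trans h)), if_neg (fun h => hac (h1.symm.trans h)),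
        add_zero, add_zero]
    · by_cases h2 : w = b
      · rw [if_pos ((hP w).mpr (Or.inr (Or.inl h2))), if_neg h1, if_pos h2,
          if_neg (fun h => hbc (h2.symm.trans h)), zero_add, add_zero]
      · by_cases h3 : w = c
        · rw [if_pos ((hP w).mpr (Or.inr (Or.inr h3))), if_neg h1, if_neg h2, if_pos h3,
            add_zero, zero_add]
        · rw [if_neg (fun h => by rcases (hP w).mp h with h' | h' | h' <;> contradiction),
            if_neg h1, if_neg h2, if_neg h3, add_zero, add_zero]
  rw [Finset.sum_congr rfl fun w _ => key w, Finset.sum_add_distrib, Finset.sum_add_distrib,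
    Finset.sum_ite_eq' univ a x, Finset.sum_ite_eq' univ b x, Finset.sum_ite_eq' univ c x]
  simp

end nbhd

section nbhd2
open Matrix Finset
variable {k D n : ℕ} (hk : 3 ≤ k) (hD : 4 ≤ D) (hn : n = D + 2 * k - 1)

def Wset (k D n : ℕ) : Finset (Fin n) := Finset.univ.filter (fun w => D + k - 1 ≤ w.val)
def Uset (k D n : ℕ) : Finset (Fin n) :=
  Finset.univ.filter (fun w => D - 1 ≤ w.val ∧ w.val ≤ D + k - 2)

lemma card_filter_val {n : ℕ} (p : ℕ → Prop) [DecidablePred p] :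
    (Finset.univ.filter (fun w : Fin n => p w.val)).card = ((Finset.range n).filter p).card := by
  apply Finset.card_bij (fun w _ => w.val)
  · intro a ha
    simp only [Finset.mem_filter, Finset.mem_univ, true_and] at ha
    simp only [Finset.mem_filter, Finset.mem_range]
    exact ⟨a.isLt, ha⟩
  · intro a _ b _ h; exact Fin.ext h
  · intro b hb
    simp only [Finset.mem_filter, Finset.mem_range] at hb
    exact ⟨⟨b, hb.1⟩, by simp [hb.2], rfl⟩

include hk hD hn

lemma Wset_card : (Wset k D n).card = k := by
  rw [Wset, card_filter_val (p := fun m => D + k - 1 ≤ m)]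
  have : (Finset.range n).filter (fun v => D + k - 1 ≤ v) = Finset.Ico (D + k - 1) n := by
    ext v; simp only [Finset.mem_filter, Finset.mem_range, Finset.mem_Ico]; omega
  rw [this, Nat.card_Ico]; omega

lemma Uset_card : (Uset k D n).card = k := by
  rw [Uset, card_filter_val (p := fun m => D - 1 ≤ m ∧ m ≤ D + k - 2)]
  have : (Finset.range n).filter (fun v => D - 1 ≤ v ∧ v ≤ D + k - 2)
      = Finset.Ico (D - 1) (D + k - 1) := by
    ext v; simp only [Finset.mem_filter, Finset.mem_range, Finset.mem_Ico]; omega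
  rw [this, Nat.card_Ico]; omega

variable (x : Fin n → ℝ)

lemma mv_a {v a b : Fin n} (hv : v.val = 0) (ha : a.val = 1) (hb : b.val = 2) :
    (adjMat (myG k D n) *ᵥ x) v = x a + x b := by
  rw [mulVec_adj]
  refine sum_ite_two (fun h => by rw [Fin.ext_iff] at h; omega) _ (fun w => ?_) x
  rw [myG_adj_iff]; unfold gRel; rw [Fin.ext_iff, Fin.ext_iff]
  have hw := w.isLt
  omega

lemma mv_b {v a b : Fin n} (hv : v.val = 1) (ha : a.val = 0) (hb : b.val = 2) :
    (adjMat (myG k D n) *ᵥ x) v = x a + x b := by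
  rw [mulVec_adj]
  refine sum_ite_two (fun h => by rw [Fin.ext_iff] at h; omega) _ (fun w => ?_) x
  rw [myG_adj_iff]; unfold gRel; rw [Fin.ext_iff, Fin.ext_iff]
  have hw := w.isLt
  omega

lemma mv_c {v a b c : Fin n} (hv : v.val = 2) (ha : a.val = 0) (hb : b.val = 1)
    (hc : c.val = 3) :
    (adjMat (myG k D n) *ᵥ x) v = x a + x b + x c := by
  rw [mulVec_adj]
  refine sum_ite_three (fun h => by rw [Fin.ext_iff] at h; omega)
    (fun h => by rw [Fin.ext_iff] at h; omega)
    (fun h => by rw [Fin.ext_iff] at h; omega) _ (fun w => ?_) x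
  rw [myG_adj_iff]; unfold gRel; rw [Fin.ext_iff, Fin.ext_iff, Fin.ext_iff]
  have hw := w.isLt
  omega

lemma mv_path {v a b : Fin n} (h3 : 3 ≤ v.val) (hle : v.val ≤ D - 2)
    (ha : a.val = v.val - 1) (hb : b.val = v.val + 1) :
    (adjMat (myG k D n) *ᵥ x) v = x a + x b := by
  rw [mulVec_adj]
  refine sum_ite_two (fun h => by rw [Fin.ext_iff] at h; omega) _ (fun w => ?_) x
  rw [myG_adj_iff]; unfold gRel; rw [Fin.ext_iff, Fin.ext_iff]
  have hw := w.isLt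
  omega

lemma mv_ustar {v a : Fin n} (hv : v.val = D - 1) (ha : a.val = D - 2) :
    (adjMat (myG k D n) *ᵥ x) v = x a + ∑ w ∈ Wset k D n, x w := by
  rw [mulVec_adj]
  have key : ∀ w : Fin n, (if (myG k D n).Adj v w then x w else 0)
      = (if w = a then x w else 0) + (if D + k - 1 ≤ w.val then x w else 0) := by
    intro w
    have hw := w.isLt
    have hiff : (myG k D n).Adj v w ↔ (w = a ∨ D + k - 1 ≤ w.val) := by
      rw [myG_adj_iff]; unfold gRel; rw [Fin.ext_iff]; omega
    by_cases h1 : w = a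
    · have h2 : ¬ (D + k - 1 ≤ w.val) := by rw [Fin.ext_iff] at h1; omega
      rw [if_pos (hiff.mpr (Or.inl h1)), if_pos h1, if_neg h2, add_zero]
    · by_cases h2 : D + k - 1 ≤ w.val
      · rw [if_pos (hiff.mpr (Or.inr h2)), if_neg h1, if_pos h2, zero_add]
      · rw [if_neg (fun h => by rcases hiff.mp h with h' | h' <;> contradiction),
          if_neg h1, if_neg h2, add_zero]
  rw [Finset.sum_congr rfl fun w _ => key w, Finset.sum_add_distrib,
    Finset.sum_ite_eq' univ a x, if_pos (Finset.mem_univ a), ← Finset.sum_filter]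
  rfl

lemma mv_U' {v : Fin n} (hv1 : D ≤ v.val) (hv2 : v.val ≤ D + k - 2) :
    (adjMat (myG k D n) *ᵥ x) v = ∑ w ∈ Wset k D n, x w := by
  rw [mulVec_adj]
  have key : ∀ w : Fin n, (if (myG k D n).Adj v w then x w else 0)
      = (if D + k - 1 ≤ w.val then x w else 0) := by
    intro w
    have hw := w.isLt
    have hiff : (myG k D n).Adj v w ↔ D + k - 1 ≤ w.val := by
      rw [myG_adj_iff]; unfold gRel; omega
    by_cases h : D + k - 1 ≤ w.val
    · rw [if_pos (hiff.mpr h), if_pos h]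
    · rw [if_neg (fun hc => h (hiff.mp hc)), if_neg h]
  rw [Finset.sum_congr rfl fun w _ => key w, ← Finset.sum_filter]
  rfl

lemma mv_W {v : Fin n} (hv : D + k - 1 ≤ v.val) :
    (adjMat (myG k D n) *ᵥ x) v = ∑ w ∈ Uset k D n, x w := by
  rw [mulVec_adj]
  have key : ∀ w : Fin n, (if (myG k D n).Adj v w then x w else 0)
      = (if D - 1 ≤ w.val ∧ w.val ≤ D + k - 2 then x w else 0) := by
    intro w
    have hw := w.isLt
    have hv2 := v.isLt
    have hiff : (myG k D n).Adj v w ↔ (D - 1 ≤ w.val ∧ w.val ≤ D + k - 2) := by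
      rw [myG_adj_iff]; unfold gRel; omega
    by_cases h : D - 1 ≤ w.val ∧ w.val ≤ D + k - 2
    · rw [if_pos (hiff.mpr h), if_pos h]
    · rw [if_neg (fun hc => h (hiff.mp hc)), if_neg h]
  rw [Finset.sum_congr rfl fun w _ => key w, ← Finset.sum_filter]
  rfl

end nbhd2

section positivity
open Matrix Finset
variable {n : ℕ}

lemma eigvec_pos (G : SimpleGraph (Fin n)) [DecidableRel G.Adj] (hc : G.Connected)
    {x : Fin n → ℝ} {μ : ℝ} (hx0 : x ≠ 0) (hnn : ∀ i, 0 ≤ x i)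
    (heig : adjMat G *ᵥ x = μ • x) (hμ : 0 < μ) : ∀ v, 0 < x v := by
  have hzero : ∀ v, x v = 0 → ∀ w, G.Adj v w → x w = 0 := by
    intro v hv w hadj
    have h1 : (adjMat G *ᵥ x) v = 0 := by
      rw [heig, Pi.smul_apply, smul_eq_mul, hv, mul_zero]
    rw [mulVec_adj] at h1
    have h2 := (Finset.sum_eq_zero_iff_of_nonneg (fun w _ => by
      by_cases h : G.Adj v w
      · rw [if_pos h]; exact hnn w
      · rw [if_neg h])).mp h1 w (Finset.mem_univ w)
    rwa [if_pos hadj] at h2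
  have hreach : ∀ v w : Fin n, x v = 0 → G.Reachable v w → x w = 0 := by
    intro v w hv hr
    obtain ⟨p⟩ := hr
    induction p with
    | nil => exact hv
    | @cons a b c hadj p ih => exact ih (hzero a hv b hadj)
  intro v
  rcases lt_or_eq_of_le (hnn v) with h | h
  · exact h
  · exfalso
    apply hx0
    funext w
    exact hreach v w h.symm (hc.preconnected v w)

lemma quad_double (G : SimpleGraph (Fin n)) [DecidableRel G.Adj] (z : Fin n → ℝ) :
    z ⬝ᵥ (adjMat G *ᵥ z) = ∑ i, ∑ j, if G.Adj i j then z i * z j else 0 := by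
  unfold dotProduct
  refine Finset.sum_congr rfl fun i _ => ?_
  rw [mulVec_adj, Finset.mul_sum]
  refine Finset.sum_congr rfl fun j _ => ?_
  split_ifs <;> ring

lemma dot_two (z : Fin n → ℝ) {a b : Fin n} (hab : a ≠ b)
    (hz : ∀ w, w ≠ a → w ≠ b → z w = 0) (y : Fin n → ℝ) :
    z ⬝ᵥ y = z a * y a + z b * y b := by
  unfold dotProduct
  have key : ∀ w, z w * y w
      = (if w = a then z a * y a else 0) + (if w = b then z b * y b else 0) := by
    intro w
    by_cases h1 : w = a
    · subst h1; rw [if_pos rfl, if_neg hab, add_zero]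
    · by_cases h2 : w = b
      · subst h2; rw [if_neg h1, if_pos rfl, zero_add]
      · rw [if_neg h1, if_neg h2, add_zero, hz w h1 h2, zero_mul]
  rw [Finset.sum_congr rfl fun w _ => key w, Finset.sum_add_distrib,
    Finset.sum_ite_eq' Finset.univ a, Finset.sum_ite_eq' Finset.univ b]
  simp

end positivity

section flip
open Matrix Finset
variable {k D n : ℕ} (hk : 3 ≤ k) (hD : 4 ≤ D) (hn : n = D + 2 * k - 1)

lemma sum_sum_pair (f : Fin n → Fin n → ℝ) (a b : Fin n) :
    (∑ i, ∑ j, if i = a ∧ j = b then f i j else 0) = f a b := by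
  have inner : ∀ i : Fin n, (∑ j, if i = a ∧ j = b then f i j else 0)
      = if i = a then f i b else 0 := by
    intro i
    by_cases h : i = a
    · rw [if_pos h]
      simp only [h, true_and]
      rw [Finset.sum_ite_eq' Finset.univ b (f a), if_pos (Finset.mem_univ b)]
    · rw [if_neg h]
      exact Finset.sum_eq_zero fun j _ => if_neg (fun hc => h hc.1)
  rw [Finset.sum_congr rfl fun i _ => inner i,
    Finset.sum_ite_eq' Finset.univ a (fun i => f i b), if_pos (Finset.mem_univ a)]

include hk hD hn

lemma flip_identity (x : Fin n → ℝ) (va vb : Fin n) (hva : va.val = 0) (hvb : vb.val = 1) :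
    x ⬝ᵥ (adjMat (myG k D n) *ᵥ x)
      + (fun v => (-1:ℝ)^(lvl k D v.val) * x v) ⬝ᵥ
        (adjMat (myG k D n) *ᵥ (fun v => (-1:ℝ)^(lvl k D v.val) * x v))
      = 4 * (x va * x vb) := by
  set σ : Fin n → ℝ := fun v => (-1:ℝ)^(lvl k D v.val) with hσdef
  have hσσ : ∀ v, σ v * σ v = 1 := fun v => by
    rw [hσdef]
    simp only
    rw [← pow_add]
    exact Even.neg_one_pow ⟨lvl k D v.val, rfl⟩
  have hvab : va ≠ vb := fun h => by
    have : va.val = vb.val := congrArg Fin.val h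
    omega
  have hadjab : (myG k D n).Adj va vb :=
    Or.inl (show gRel k D va.val vb.val by unfold gRel; omega)
  have hσa : σ va = 1 := by
    rw [hσdef]; simp only
    have : lvl k D va.val = 0 := by rw [hva]; unfold lvl; norm_num
    rw [this, pow_zero]
  have hσb : σ vb = 1 := by
    rw [hσdef]; simp only
    have : lvl k D vb.val = 0 := by rw [hvb]; unfold lvl; norm_num
    rw [this, pow_zero]
  have hσadj : ∀ i j : Fin n, (myG k D n).Adj i j → ¬(i = va ∧ j = vb) →
      ¬(i = vb ∧ j = va) → σ i * σ j = -1 := by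
    intro i j hadj hp1 hp2
    have hsq : ∀ m : ℕ, (-1:ℝ)^m * (-1:ℝ)^m = 1 := fun m => by
      rw [← pow_add]; exact Even.neg_one_pow ⟨m, rfl⟩
    rcases adj_lvl hk hD hn hadj with (⟨hi, hj⟩ | ⟨hi, hj⟩) | h | h
    · exact absurd ⟨Fin.ext (by omega), Fin.ext (by omega)⟩ hp1
    · exact absurd ⟨Fin.ext (by omega), Fin.ext (by omega)⟩ hp2
    · rw [hσdef]; simp only
      rw [h, pow_succ, ← mul_assoc, hsq, one_mul]
    · rw [hσdef]; simp only
      rw [h, pow_succ, mul_comm, ← mul_assoc, hsq, one_mul]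
  have key : ∀ i j : Fin n, (if (myG k D n).Adj i j then x i * x j else 0)
      + (if (myG k D n).Adj i j then (σ i * x i) * (σ j * x j) else 0)
      = (if i = va ∧ j = vb then 2*(x i * x j) else 0)
        + (if i = vb ∧ j = va then 2*(x i * x j) else 0) := by
    intro i j
    by_cases hadj : (myG k D n).Adj i j
    · rw [if_pos hadj, if_pos hadj]
      by_cases hp1 : i = va ∧ j = vb
      · have hp2 : ¬ (i = vb ∧ j = va) := by
          rintro ⟨h1, h2⟩
          exact hvab (hp1.1.symm.trans h1)
        rw [if_pos hp1, if_neg hp2, add_zero, hp1.1, hp1.2, hσa, hσb]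
        ring
      · by_cases hp2 : i = vb ∧ j = va
        · rw [if_neg hp1, if_pos hp2, zero_add, hp2.1, hp2.2, hσa, hσb]
          ring
        · rw [if_neg hp1, if_neg hp2, add_zero]
          have := hσadj i j hadj hp1 hp2
          calc x i * x j + σ i * x i * (σ j * x j)
              = x i * x j + (σ i * σ j) * (x i * x j) := by ring
            _ = 0 := by rw [this]; ring
    · rw [if_neg hadj, if_neg hadj, add_zero]
      have hp1 : ¬ (i = va ∧ j = vb) := by
        rintro ⟨h1, h2⟩; rw [h1, h2] at hadj; exact hadj hadjab
      have hp2 : ¬ (i = vb ∧ j = va) := by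
        rintro ⟨h1, h2⟩; rw [h1, h2] at hadj; exact hadj hadjab.symm
      rw [if_neg hp1, if_neg hp2, add_zero]
  rw [quad_double, quad_double]
  rw [← Finset.sum_add_distrib]
  have : ∀ i : Fin n, ((∑ j, if (myG k D n).Adj i j then x i * x j else 0)
      + ∑ j, if (myG k D n).Adj i j then (σ i * x i) * (σ j * x j) else 0)
      = (∑ j, if i = va ∧ j = vb then 2*(x i * x j) else 0)
        + ∑ j, if i = vb ∧ j = va then 2*(x i * x j) else 0 := by
    intro i
    rw [← Finset.sum_add_distrib, ← Finset.sum_add_distrib]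
    exact Finset.sum_congr rfl fun j _ => key i j
  rw [Finset.sum_congr rfl fun i _ => this i, Finset.sum_add_distrib,
    sum_sum_pair (fun i j => 2*(x i * x j)) va vb, sum_sum_pair (fun i j => 2*(x i * x j)) vb va]
  ring

end flip
section main
open Matrix Finset

theorem stmt13 (k D n : ℕ) (hk : 3 ≤ k) (hD : 4 ≤ D) (hn : n = D + 2 * k - 1) :
    ∃ G : SimpleGraph (Fin n), G.Connected ∧ ¬ G.Colorable 2 ∧
      (∀ u v, G.dist u v ≤ D) ∧ (∃ u v, G.dist u v = D) ∧
      ∀ μ ν : ℝ, IsMaxAdjEigenvalue (adjMat G) μ → IsMinAdjEigenvalue (adjMat G) ν →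
        μ > (k : ℝ) ∧ μ + ν < 4 / ((k : ℝ) - 1) ^ (2 * D - 4) := by
  refine ⟨myG k D n, myG_connected hk hD hn, myG_not_colorable hk hD hn,
    myG_dist_le hk hD hn, myG_dist_exists hk hD hn, ?_⟩
  intro μ ν hmax hmin
  have hk3 : (3:ℝ) ≤ (k:ℝ) := by exact_mod_cast hk
  have hA : (adjMat (myG k D n)).IsHermitian := adjMat_herm _
  obtain ⟨x, hx0, hxnn, heig⟩ := exists_nonneg_eigenvector hA (adjMat_nonneg _) hmax
  have heq : ∀ v, (adjMat (myG k D n) *ᵥ x) v = μ * x v := fun v => by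
    rw [heig]; simp
  have h0 : (0:ℕ) < n := by omega
  have h1 : (1:ℕ) < n := by omega
  have h2 : (2:ℕ) < n := by omega
  have h3 : (3:ℕ) < n := by omega
  have hv01 : (⟨0,h0⟩ : Fin n) ≠ ⟨1,h1⟩ := Fin.ne_of_val_ne (by norm_num)
  -- Step 1 : μ ≥ 1
  have hmu1 : (1:ℝ) ≤ μ := by
    set z : Fin n → ℝ := fun w => if w.val ≤ 1 then 1 else 0 with hzdef
    have hz0 : z ⟨0,h0⟩ = 1 := by rw [hzdef]; show (if (0:ℕ) ≤ 1 then (1:ℝ) else 0) = 1; norm_num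
    have hz1 : z ⟨1,h1⟩ = 1 := by rw [hzdef]; show (if (1:ℕ) ≤ 1 then (1:ℝ) else 0) = 1; norm_num
    have hz2 : z ⟨2,h2⟩ = 0 := by rw [hzdef]; show (if (2:ℕ) ≤ 1 then (1:ℝ) else 0) = 0; norm_num
    have hzsupp : ∀ w : Fin n, w ≠ ⟨0,h0⟩ → w ≠ ⟨1,h1⟩ → z w = 0 := by
      intro w hw0 hw1
      have e0 : w.val ≠ 0 := fun h => hw0 (Fin.ext h)
      have e1 : w.val ≠ 1 := fun h => hw1 (Fin.ext h)
      rw [hzdef]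
      exact if_neg (by omega)
    have hAz0 : (adjMat (myG k D n) *ᵥ z) ⟨0,h0⟩ = z ⟨1,h1⟩ + z ⟨2,h2⟩ :=
      mv_a hk hD hn z rfl rfl rfl
    have hAz1 : (adjMat (myG k D n) *ᵥ z) ⟨1,h1⟩ = z ⟨0,h0⟩ + z ⟨2,h2⟩ :=
      mv_b hk hD hn z rfl rfl rfl
    have hdot : z ⬝ᵥ (adjMat (myG k D n) *ᵥ z) = 2 := by
      rw [dot_two z hv01 hzsupp, hAz0, hAz1, hz0, hz1, hz2]
      ring
    have hzz : z ⬝ᵥ z = 2 := by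
      rw [dot_two z hv01 hzsupp z, hz0, hz1]
      ring
    have := quad_le_max hA hmax z
    rw [hdot, hzz] at this
    linarith
  -- Step 2 : positivity of the eigenvector
  have hxpos : ∀ v, 0 < x v :=
    eigvec_pos _ (myG_connected hk hD hn) hx0 hxnn heig (by linarith)
  -- the path entries
  set e : ℕ → ℝ := fun j => if h : j < n then x ⟨j, h⟩ else 0 with hedef
  have he : ∀ j (h : j < n), e j = x ⟨j, h⟩ := fun j h => by rw [hedef]; exact dif_pos h
  have henn : ∀ j, 0 ≤ e j := fun j => by
    by_cases h : j < n
    · rw [he j h]; exact le_of_lt (hxpos _)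
    · rw [hedef]; dsimp only; rw [dif_neg h]
  have hepos : ∀ j (h : j < n), 0 < e j := fun j h => by rw [he j h]; exact hxpos _
  -- Step 3 : μ > k via the complete bipartite part
  have hUne : (Uset k D n).Nonempty := by
    rw [← Finset.card_pos, Uset_card hk hD hn]; omega
  have hWne : (Wset k D n).Nonempty := by
    rw [← Finset.card_pos, Wset_card hk hD hn]; omega
  have hSpos : 0 < ∑ w ∈ Uset k D n, x w := Finset.sum_pos (fun i _ => hxpos i) hUne
  have hTpos : 0 < ∑ w ∈ Wset k D n, x w := Finset.sum_pos (fun i _ => hxpos i) hWne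
  have hTS : μ * ∑ w ∈ Wset k D n, x w = k * ∑ w ∈ Uset k D n, x w := by
    have hterm : ∀ w ∈ Wset k D n, μ * x w = ∑ w ∈ Uset k D n, x w := by
      intro w hw
      have hwv : D + k - 1 ≤ w.val := by
        have := Finset.mem_filter.mp hw
        exact this.2
      exact (heq w).symm.trans (mv_W hk hD hn x hwv)
    calc μ * ∑ w ∈ Wset k D n, x w = ∑ w ∈ Wset k D n, μ * x w := Finset.mul_sum _ _ _
      _ = ∑ _w ∈ Wset k D n, ∑ u ∈ Uset k D n, x u := Finset.sum_congr rfl hterm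
      _ = (Wset k D n).card • ∑ u ∈ Uset k D n, x u := Finset.sum_const _
      _ = k * ∑ u ∈ Uset k D n, x u := by rw [Wset_card hk hD hn, nsmul_eq_mul]
  have hDm1 : D - 1 < n := by omega
  have hDm2 : D - 2 < n := by omega
  have hustar_mem : (⟨D-1, hDm1⟩ : Fin n) ∈ Uset k D n := by
    rw [Uset, Finset.mem_filter]
    refine ⟨Finset.mem_univ _, ?_⟩
    show D - 1 ≤ D - 1 ∧ D - 1 ≤ D + k - 2
    omega
  have hST : μ * ∑ w ∈ Uset k D n, x w
      = k * ∑ w ∈ Wset k D n, x w + e (D - 2) := by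
    have hsplit := Finset.sum_erase_add (Uset k D n) (fun w => μ * x w) hustar_mem
    have hterm : ∀ w ∈ (Uset k D n).erase ⟨D-1, hDm1⟩, μ * x w = ∑ u ∈ Wset k D n, x u := by
      intro w hw
      obtain ⟨hne, hmem⟩ := Finset.mem_erase.mp hw
      have hv := (Finset.mem_filter.mp hmem).2
      have hvne : w.val ≠ D - 1 := fun h => hne (Fin.ext h)
      exact (heq w).symm.trans (mv_U' hk hD hn x (by omega) hv.2)
    have hstar : μ * x ⟨D-1, hDm1⟩ = x ⟨D-2, hDm2⟩ + ∑ u ∈ Wset k D n, x u :=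
      (heq _).symm.trans (mv_ustar hk hD hn x rfl rfl)
    have hcard : ((Uset k D n).erase ⟨D-1, hDm1⟩).card = k - 1 := by
      rw [Finset.card_erase_of_mem hustar_mem, Uset_card hk hD hn]
    calc μ * ∑ w ∈ Uset k D n, x w = ∑ w ∈ Uset k D n, μ * x w := Finset.mul_sum _ _ _
      _ = (∑ w ∈ (Uset k D n).erase ⟨D-1, hDm1⟩, μ * x w) + μ * x ⟨D-1, hDm1⟩ := hsplit.symm
      _ = (∑ _w ∈ (Uset k D n).erase ⟨D-1, hDm1⟩, ∑ u ∈ Wset k D n, x u)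
            + (x ⟨D-2, hDm2⟩ + ∑ u ∈ Wset k D n, x u) := by
          rw [Finset.sum_congr rfl hterm, hstar]
      _ = ((k:ℝ) - 1) * (∑ u ∈ Wset k D n, x u) + (x ⟨D-2, hDm2⟩ + ∑ u ∈ Wset k D n, x u) := by
          rw [Finset.sum_const, hcard, nsmul_eq_mul]
          congr 1
          push_cast [Nat.cast_sub (by omega : 1 ≤ k)]
          ring
      _ = k * ∑ w ∈ Wset k D n, x w + e (D - 2) := by
          rw [he (D-2) hDm2]
          ring
  have hkey : μ * (μ * ∑ w ∈ Uset k D n, x w)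
      = k * k * ∑ w ∈ Uset k D n, x w + μ * e (D - 2) := by
    linear_combination μ * hST + (k:ℝ) * hTS
  have hμk : (k:ℝ) < μ := by
    by_contra hcon
    push_neg at hcon
    have hep : 0 < e (D - 2) := hepos (D-2) hDm2
    nlinarith [hkey, hSpos, hep, hmu1, hcon, hk3]
  refine ⟨hμk, ?_⟩
  -- Step 4 : the recurrence relations along the path
  have R0 : μ * e 0 = e 1 + e 2 := by
    have := mv_a hk hD hn x (v := ⟨0,h0⟩) (a := ⟨1,h1⟩) (b := ⟨2,h2⟩) rfl rfl rfl
    rw [heq] at this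
    rw [he 0 h0, he 1 h1, he 2 h2]
    exact this
  have R1 : μ * e 1 = e 0 + e 2 := by
    have := mv_b hk hD hn x (v := ⟨1,h1⟩) (a := ⟨0,h0⟩) (b := ⟨2,h2⟩) rfl rfl rfl
    rw [heq] at this
    rw [he 0 h0, he 1 h1, he 2 h2]
    exact this
  have R2 : μ * e 2 = e 0 + e 1 + e 3 := by
    have := mv_c hk hD hn x (v := ⟨2,h2⟩) (a := ⟨0,h0⟩) (b := ⟨1,h1⟩) (c := ⟨3,h3⟩)
      rfl rfl rfl rfl
    rw [heq] at this
    rw [he 0 h0, he 1 h1, he 2 h2, he 3 h3]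
    exact this
  have Rmid : ∀ j, 3 ≤ j → j ≤ D - 2 → μ * e j = e (j-1) + e (j+1) := by
    intro j hj3 hjD
    have hj : j < n := by omega
    have hjm : j - 1 < n := by omega
    have hjp : j + 1 < n := by omega
    have := mv_path hk hD hn x (v := ⟨j,hj⟩) (a := ⟨j-1,hjm⟩) (b := ⟨j+1,hjp⟩)
      hj3 hjD rfl rfl
    rw [heq] at this
    rw [he j hj, he (j-1) hjm, he (j+1) hjp]
    exact this
  have he01 : e 0 = e 1 := by
    have hfac : (μ + 1) * (e 0 - e 1) = 0 := by linear_combination R0 - R1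
    rcases mul_eq_zero.mp hfac with h | h
    · linarith
    · linarith [sub_eq_zero.mp h]
  have he2 : e 2 = (μ - 1) * e 0 := by linear_combination he01 - R0
  -- Step 5 : growth along the path
  have Q : ∀ j, 2 ≤ j → j ≤ D - 1 → ((k:ℝ)-1) * e (j-1) ≤ e j ∧ e (j-1) ≤ e j := by
    intro j
    induction j using Nat.strong_induction_on with
    | _ j ih =>
      intro hj2 hjD
      rcases Nat.lt_or_ge j 3 with hj3 | hj3
      · -- j = 2
        have hj : j = 2 := by omega
        subst hj
        constructor
        · show ((k:ℝ)-1) * e 1 ≤ e 2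
          rw [← he01, he2]
          exact mul_le_mul_of_nonneg_right (by linarith) (henn 0)
        · show e 1 ≤ e 2
          rw [← he01, he2]
          nlinarith [henn 0]
      · rcases Nat.lt_or_ge j 4 with hj4 | hj4
        · -- j = 3
          have hj : j = 3 := by omega
          subst hj
          have he3 : e 3 = (μ*(μ-1) - 2) * e 0 := by
            linear_combination μ * he2 - R2 + he01
          have hfac : 0 ≤ (μ-1)*(μ-k+1) - 2 := by nlinarith [hμk, hk3]
          constructor
          · show ((k:ℝ)-1) * e 2 ≤ e 3
            rw [he2, he3]
            nlinarith [mul_nonneg hfac (henn 0), henn 0]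
          · show e 2 ≤ e 3
            rw [he2, he3]
            nlinarith [mul_nonneg hfac (henn 0), henn 0, hμk, hk3]
        · -- j ≥ 4
          have hrec := Rmid (j-1) (by omega) (by omega)
          rw [show (j-1) - 1 = j - 2 by omega, show (j-1) + 1 = j by omega] at hrec
          obtain ⟨ih1, ih2⟩ := ih (j-1) (by omega) (by omega) (by omega)
          rw [show (j-1) - 1 = j - 2 by omega] at ih1 ih2
          have hn1 : 0 ≤ e (j-1) := henn (j-1)
          constructor
          · nlinarith [hrec, ih2, hn1, hμk, hk3]
          · nlinarith [hrec, ih2, hn1, hμk, hk3]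
  have C : ∀ j, 2 ≤ j → j ≤ D - 1 → ((k:ℝ)-1)^(j-1) * e 0 ≤ e j := by
    intro j
    induction j using Nat.strong_induction_on with
    | _ j ih =>
      intro hj2 hjD
      rcases Nat.lt_or_ge j 3 with hj3 | hj3
      · have hj : j = 2 := by omega
        subst hj
        have := (Q 2 (by omega) (by omega)).1
        show ((k:ℝ)-1)^1 * e 0 ≤ e 2
        rw [pow_one, he01]
        exact this
      · have ihc := ih (j-1) (by omega) (by omega) (by omega)
        rw [show (j-1) - 1 = j - 2 by omega] at ihc
        have hq := (Q j hj2 hjD).1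
        have hkpos : (0:ℝ) ≤ (k:ℝ) - 1 := by linarith
        calc ((k:ℝ)-1)^(j-1) * e 0 = ((k:ℝ)-1) * (((k:ℝ)-1)^(j-2) * e 0) := by
              rw [show j - 1 = (j-2) + 1 by omega, pow_succ]
              ring
          _ ≤ ((k:ℝ)-1) * e (j-1) := mul_le_mul_of_nonneg_left ihc hkpos
          _ ≤ e j := hq
  -- Step 6 : the sign-flip bound
  have hxAx : x ⬝ᵥ (adjMat (myG k D n) *ᵥ x) = μ * (x ⬝ᵥ x) := by
    rw [heig, dotProduct_smul, smul_eq_mul]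
  have hflip := flip_identity hk hD hn x ⟨0,h0⟩ ⟨1,h1⟩ rfl rfl
  set y : Fin n → ℝ := fun v => (-1:ℝ)^(lvl k D v.val) * x v with hydef
  have hsq : ∀ m : ℕ, (-1:ℝ)^m * (-1:ℝ)^m = 1 := fun m => by
    rw [← pow_add]; exact Even.neg_one_pow ⟨m, rfl⟩
  have hyy : y ⬝ᵥ y = x ⬝ᵥ x := by
    unfold dotProduct
    refine Finset.sum_congr rfl fun v _ => ?_
    rw [hydef]
    calc ((-1:ℝ)^(lvl k D v.val) * x v) * ((-1:ℝ)^(lvl k D v.val) * x v)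
        = ((-1:ℝ)^(lvl k D v.val) * (-1:ℝ)^(lvl k D v.val)) * (x v * x v) := by ring
      _ = x v * x v := by rw [hsq, one_mul]
  have hmin2 := quad_ge_min hA hmin y
  rw [hyy] at hmin2
  have hmain : (μ + ν) * (x ⬝ᵥ x) ≤ 4 * (x ⟨0,h0⟩ * x ⟨1,h1⟩) := by
    have : y ⬝ᵥ (adjMat (myG k D n) *ᵥ y) = 4 * (x ⟨0,h0⟩ * x ⟨1,h1⟩) - μ * (x ⬝ᵥ x) := by
      rw [← hxAx]
      linarith [hflip]
    nlinarith [hmin2, this]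
  -- Step 7 : conclusion
  have hspos : 0 < x ⬝ᵥ x := by
    have hterm : x ⟨0,h0⟩ * x ⟨0,h0⟩ ≤ x ⬝ᵥ x := by
      unfold dotProduct
      exact Finset.single_le_sum (f := fun i => x i * x i)
        (fun i _ => mul_nonneg (hxnn i) (hxnn i)) (Finset.mem_univ (⟨0,h0⟩ : Fin n))
    nlinarith [hxpos ⟨0,h0⟩, hterm]
  have hx01 : x ⟨0,h0⟩ = e 0 := (he 0 h0).symm
  have hx11 : x ⟨1,h1⟩ = e 1 := (he 1 h1).symm
  have hgrow : ((k:ℝ)-1)^(D-2) * e 0 ≤ e (D-1) := by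
    have := C (D-1) (by omega) (le_refl _)
    rwa [show (D-1) - 1 = D - 2 by omega] at this
  have hvstar0 : (⟨D-1, hDm1⟩ : Fin n) ≠ ⟨0,h0⟩ := Fin.ne_of_val_ne (show D - 1 ≠ 0 by omega)
  have hsum2 : e (D-1) * e (D-1) + e 0 * e 0 ≤ x ⬝ᵥ x := by
    have hsub : ({⟨D-1, hDm1⟩, ⟨0,h0⟩} : Finset (Fin n)) ⊆ Finset.univ :=
      Finset.subset_univ _
    have := Finset.sum_le_sum_of_subset_of_nonneg hsub
      (fun i _ _ => mul_nonneg (hxnn i) (hxnn i)) (f := fun i => x i * x i)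
    rw [Finset.sum_pair hvstar0] at this
    unfold dotProduct
    rw [he (D-1) hDm1, he 0 h0]
    exact this
  have he0pos : 0 < e 0 := hepos 0 h0
  have hkm1 : (0:ℝ) < (k:ℝ) - 1 := by linarith
  have hP : (0:ℝ) < ((k:ℝ) - 1) ^ (2*D - 4) := pow_pos hkm1 _
  have hPe : ((k:ℝ)-1)^(2*D-4) * (e 0 * e 0) ≤ e (D-1) * e (D-1) := by
    have hgnn : (0:ℝ) ≤ ((k:ℝ)-1)^(D-2) * e 0 := by positivity
    have h1 : (((k:ℝ)-1)^(D-2) * e 0) * (((k:ℝ)-1)^(D-2) * e 0) ≤ e (D-1) * e (D-1) :=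
      mul_self_le_mul_self hgnn hgrow
    calc ((k:ℝ)-1)^(2*D-4) * (e 0 * e 0)
        = (((k:ℝ)-1)^(D-2) * e 0) * (((k:ℝ)-1)^(D-2) * e 0) := by
          rw [show 2*D-4 = (D-2)+(D-2) from by omega, pow_add]; ring
      _ ≤ e (D-1) * e (D-1) := h1
  have hslt : ((k:ℝ)-1)^(2*D-4) * (e 0 * e 0) < x ⬝ᵥ x := by
    nlinarith [hPe, hsum2, he0pos]
  rw [hx01, hx11, ← he01] at hmain
  rcases le_or_gt (μ + ν) 0 with hc | hc
  · exact lt_of_le_of_lt hc (div_pos (by norm_num) hP)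
  · rw [lt_div_iff₀ hP]
    nlinarith [mul_lt_mul_of_pos_left hslt hc, hmain, mul_pos he0pos he0pos]
end main
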